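/- If ψ ∈ W, then ‖Bψ‖_{B⁰[ε,∞)} ≤ λ·‖ψ‖_{B⁰[ε,∞)}, where ‖·‖_{B⁰[ε,∞)} is the supremum norm on [ε,∞); in particular Bψ is bounded and B maps W into W. -/

import Mathlib

/-!
Since `y + x + |y - x| = 2 max x y`, the integrand of `B ψ` factors as the kernel
`k(x, y) = 1 / (2 max x y √(y + ε))` times the weight `y ψ / (y + ψ² / (y + ε))`, which lies
between `0` and `ψ y ≤ ‖ψ‖`. On `(ε, x]` the kernel integrates exactly to
`(√(x + ε) - √(2ε)) / x`; on `(x, ∞)` it is dominated by `(y + 2ε) / (2 y² √(y + ε))`, the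
derivative of `-√(y + ε) / y`, whose integral is `√(x + ε) / x`. As `√(2ε) √(x + ε) ≥ 2ε`, the
total is at most `2 / √(x + ε)`, whence `|B ψ x| ≤ λ ‖ψ‖`. The majorant does not depend on `x`,
so dominated convergence also gives continuity of `B ψ`.
-/

open Real Set MeasureTheory Filter Topology

/-- The nonlinear integral operator `B`. -/
noncomputable def opB (lam ε : ℝ) (ψ : ℝ → ℝ) (x : ℝ) : ℝ :=
  (lam / 2) * Real.sqrt (x + ε) *
    ∫ y in Set.Ioi ε, (1 / (y + x + |y - x|)) * (y / Real.sqrt (y + ε)) *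
      (ψ y / (y + (ψ y) ^ 2 / (y + ε)))

/-- Membership in `W`: bounded, continuous and nonnegative on `[ε,∞)`. -/
def memW (ε : ℝ) (ψ : ℝ → ℝ) : Prop :=
  ContinuousOn ψ (Set.Ici ε) ∧ (∃ M : ℝ, ∀ x ∈ Set.Ici ε, |ψ x| ≤ M) ∧
    ∀ x ∈ Set.Ici ε, 0 ≤ ψ x

lemma add_add_abs_sub_eq_two_mul_max (x y : ℝ) : y + x + |y - x| = 2 * max x y := by
  rw [abs_sub_comm, ← two_nsmul_sup_eq_add_add_abs_sub, two_nsmul, two_mul, sup_comm]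

section Kernel

variable {ε : ℝ}

noncomputable def sqrtKernel (ε x y : ℝ) : ℝ := 1 / (2 * max x y * √(y + ε))

noncomputable def sqrtKernelMajorant (ε y : ℝ) : ℝ := (y + 2 * ε) / (2 * y ^ 2 * √(y + ε))

lemma tendsto_sqrt_add_div_atTop (ε : ℝ) :
    Tendsto (fun y => √(y + ε) / y) atTop (𝓝 0) := by
  have hquot : Tendsto (fun y : ℝ => y⁻¹ + ε * (y ^ 2)⁻¹) atTop (𝓝 0) := by
    simpa using tendsto_inv_atTop_zero.add
      ((tendsto_inv_atTop_zero.comp (tendsto_pow_atTop two_ne_zero)).const_mul ε)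
  have hsqrt : Tendsto (fun y : ℝ => √(y⁻¹ + ε * (y ^ 2)⁻¹)) atTop (𝓝 0) := by
    simpa using hquot.sqrt
  refine hsqrt.congr' ?_
  filter_upwards [eventually_gt_atTop 0, eventually_ge_atTop (-ε)] with y hy hyε
  rw [show y⁻¹ + ε * (y ^ 2)⁻¹ = (y + ε) / y ^ 2 by field_simp, sqrt_div (by linarith),
    sqrt_sq hy.le]

lemma hasDerivAt_neg_sqrt_add_div (hε : 0 ≤ ε) {y : ℝ} (hy : 0 < y) :
    HasDerivAt (fun y => -(√(y + ε) / y)) (sqrtKernelMajorant ε y) y := by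
  have hyε : 0 < y + ε := by linarith
  have hsqrt : HasDerivAt (fun y => √(y + ε)) (1 / (2 * √(y + ε))) y := by
    simpa using ((hasDerivAt_id y).add_const ε).sqrt hyε.ne'
  refine (hsqrt.fun_div (hasDerivAt_id' y) hy.ne').fun_neg.congr_deriv ?_
  have hs : √(y + ε) ≠ 0 := (sqrt_pos.2 hyε).ne'
  have hsq : √(y + ε) * √(y + ε) = y + ε := mul_self_sqrt hyε.le
  rw [sqrtKernelMajorant]
  field_simp
  linear_combination 2 * hsq

lemma sqrtKernelMajorant_nonneg (hε : 0 ≤ ε) {y : ℝ} (hy : 0 < y) :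
    0 ≤ sqrtKernelMajorant ε y := by
  unfold sqrtKernelMajorant; positivity

lemma integrableOn_sqrtKernelMajorant (hε : 0 ≤ ε) {a : ℝ} (ha : 0 < a) :
    IntegrableOn (sqrtKernelMajorant ε) (Ioi a) :=
  integrableOn_Ioi_deriv_of_nonneg'
    (fun _ hy => hasDerivAt_neg_sqrt_add_div hε (ha.trans_le hy))
    (fun _ hy => sqrtKernelMajorant_nonneg hε (ha.trans hy))
    (by simpa using (tendsto_sqrt_add_div_atTop ε).neg)

lemma integral_sqrtKernelMajorant (hε : 0 ≤ ε) {a : ℝ} (ha : 0 < a) :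
    ∫ y in Ioi a, sqrtKernelMajorant ε y = √(a + ε) / a := by
  rw [integral_Ioi_of_hasDerivAt_of_nonneg'
    (fun _ hy => hasDerivAt_neg_sqrt_add_div hε (ha.trans_le hy))
    (fun _ hy => sqrtKernelMajorant_nonneg hε (ha.trans hy))
    (by simpa using (tendsto_sqrt_add_div_atTop ε).neg)]
  ring

lemma sqrtKernel_nonneg {x y : ℝ} (hy : 0 ≤ y) : 0 ≤ sqrtKernel ε x y := by
  have := hy.trans (le_max_right x y)
  unfold sqrtKernel; positivity

lemma sqrtKernel_le_sqrtKernelMajorant (hε : 0 ≤ ε) (x : ℝ) {y : ℝ} (hy : 0 < y) :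
    sqrtKernel ε x y ≤ sqrtKernelMajorant ε y := by
  have hs : 0 < √(y + ε) := sqrt_pos.2 (by linarith)
  calc sqrtKernel ε x y ≤ 1 / (2 * y * √(y + ε)) := by
        unfold sqrtKernel; gcongr; exact le_max_right x y
    _ = y / (2 * y ^ 2 * √(y + ε)) := by field_simp
    _ ≤ sqrtKernelMajorant ε y := by unfold sqrtKernelMajorant; gcongr; linarith

lemma measurable_sqrtKernel (ε x : ℝ) : Measurable (sqrtKernel ε x) := by
  unfold sqrtKernel; fun_prop

lemma continuous_sqrtKernel_left {y : ℝ} (hy : 0 < y) (hyε : 0 < y + ε) :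
    Continuous fun x => sqrtKernel ε x y := by
  have hs : 0 < √(y + ε) := sqrt_pos.2 hyε
  refine continuous_const.div (by fun_prop) fun x => ?_
  have := hy.trans_le (le_max_right x y)
  positivity

lemma integrableOn_sqrtKernel (hε : 0 < ε) (x : ℝ) : IntegrableOn (sqrtKernel ε x) (Ioi ε) :=
  (integrableOn_sqrtKernelMajorant hε.le hε).mono'
    (measurable_sqrtKernel ε x).aestronglyMeasurable <|
    (ae_restrict_iff' measurableSet_Ioi).2 <| ae_of_all _ fun y hy => by
      have hy0 : 0 < y := hε.trans hy
      rw [Real.norm_of_nonneg (sqrtKernel_nonneg hy0.le)]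
      exact sqrtKernel_le_sqrtKernelMajorant hε.le x hy0

lemma continuousOn_sqrtKernel (hε : 0 ≤ ε) (x : ℝ) :
    ContinuousOn (sqrtKernel ε x) (Ioi 0) := by
  refine continuousOn_const.div (by fun_prop) fun y (hy : 0 < y) => ?_
  have := hy.trans_le (le_max_right x y)
  have : 0 < √(y + ε) := sqrt_pos.2 (by linarith)
  positivity

lemma integral_Ioc_sqrtKernel (hε : 0 ≤ ε) {a x : ℝ} (ha : 0 < a) (hax : a ≤ x) :
    ∫ y in Ioc a x, sqrtKernel ε x y = (√(x + ε) - √(a + ε)) / x := by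
  have hderiv :
      ∀ y ∈ uIcc a x, HasDerivAt (fun y => √(y + ε) / x) (sqrtKernel ε x y) y := by
    intro y hy
    rw [uIcc_of_le hax] at hy
    have hyε : 0 < y + ε := by linarith [hy.1]
    have hs : √(y + ε) ≠ 0 := (sqrt_pos.2 hyε).ne'
    refine ((((hasDerivAt_id' y).add_const ε).sqrt hyε.ne').div_const x).congr_deriv ?_
    rw [sqrtKernel, max_eq_left hy.2]
    field_simp
  rw [← intervalIntegral.integral_of_le hax, intervalIntegral.integral_eq_sub_of_hasDerivAt hderiv
    ((continuousOn_sqrtKernel hε x).mono fun y hy => ?_).intervalIntegrable]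
  · ring
  · rw [uIcc_of_le hax] at hy
    exact ha.trans_le hy.1

lemma integral_sqrtKernel_le (hε : 0 < ε) {x : ℝ} (hx : ε ≤ x) :
    ∫ y in Ioi ε, sqrtKernel ε x y ≤ 2 / √(x + ε) := by
  have hx0 : 0 < x := hε.trans_le hx
  have hint := integrableOn_sqrtKernel hε x
  have htail : ∫ y in Ioi x, sqrtKernel ε x y ≤ √(x + ε) / x := by
    rw [← integral_sqrtKernelMajorant hε.le hx0]
    exact setIntegral_mono_on (hint.mono_set (Ioi_subset_Ioi hx))
      (integrableOn_sqrtKernelMajorant hε.le hx0) measurableSet_Ioi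
      fun y hy => sqrtKernel_le_sqrtKernelMajorant hε.le x (hx0.trans hy)
  rw [← Ioc_union_Ioi_eq_Ioi hx, setIntegral_union (Ioc_disjoint_Ioi le_rfl) measurableSet_Ioi
    (hint.mono_set Ioc_subset_Ioi_self) (hint.mono_set (Ioi_subset_Ioi hx)),
    integral_Ioc_sqrtKernel hε.le hε hx]
  have hs : 0 < √(x + ε) := sqrt_pos.2 (by linarith)
  have hts : √(ε + ε) ≤ √(x + ε) := sqrt_le_sqrt (by linarith)
  have hss : √(x + ε) * √(x + ε) = x + ε := mul_self_sqrt (by linarith)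
  have htt : √(ε + ε) * √(ε + ε) = ε + ε := mul_self_sqrt (by linarith)
  have key : (√(x + ε) - √(ε + ε)) / x + √(x + ε) / x ≤ 2 / √(x + ε) := by
    rw [← add_div, div_le_div_iff₀ hx0 hs]
    nlinarith [mul_le_mul_of_nonneg_left hts (sqrt_nonneg (ε + ε))]
  linarith

section Majorized

variable {f : ℝ → ℝ} {M : ℝ}

lemma norm_sqrtKernel_mul_le (hε : 0 ≤ ε) (hf0 : ∀ y ∈ Ioi ε, 0 ≤ f y)
    (hfM : ∀ y ∈ Ioi ε, f y ≤ M) (x : ℝ) {y : ℝ} (hy : y ∈ Ioi ε) :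
    ‖sqrtKernel ε x y * f y‖ ≤ M * sqrtKernel ε x y := by
  have hk := sqrtKernel_nonneg (ε := ε) (x := x) (hε.trans hy.out.le)
  rw [Real.norm_of_nonneg (mul_nonneg hk (hf0 y hy)), mul_comm]
  exact mul_le_mul_of_nonneg_right (hfM y hy) hk

lemma integrableOn_sqrtKernel_mul (hε : 0 < ε)
    (hf : AEStronglyMeasurable f (volume.restrict (Ioi ε)))
    (hf0 : ∀ y ∈ Ioi ε, 0 ≤ f y) (hfM : ∀ y ∈ Ioi ε, f y ≤ M) (x : ℝ) :
    IntegrableOn (fun y => sqrtKernel ε x y * f y) (Ioi ε) :=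
  ((integrableOn_sqrtKernel hε x).const_mul M).mono'
    ((measurable_sqrtKernel ε x).aestronglyMeasurable.mul hf)
    ((ae_restrict_iff' measurableSet_Ioi).2 <| ae_of_all _ fun _ hy =>
      norm_sqrtKernel_mul_le hε.le hf0 hfM x hy)

lemma integral_sqrtKernel_mul_nonneg (hε : 0 ≤ ε) (hf0 : ∀ y ∈ Ioi ε, 0 ≤ f y) (x : ℝ) :
    0 ≤ ∫ y in Ioi ε, sqrtKernel ε x y * f y :=
  setIntegral_nonneg measurableSet_Ioi fun y hy =>
    mul_nonneg (sqrtKernel_nonneg (hε.trans hy.out.le)) (hf0 y hy)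

lemma sqrt_mul_integral_sqrtKernel_mul_le (hε : 0 < ε)
    (hf : AEStronglyMeasurable f (volume.restrict (Ioi ε)))
    (hf0 : ∀ y ∈ Ioi ε, 0 ≤ f y) (hfM : ∀ y ∈ Ioi ε, f y ≤ M) {x : ℝ}
    (hx : ε ≤ x) :
    √(x + ε) * ∫ y in Ioi ε, sqrtKernel ε x y * f y ≤ 2 * M := by
  have hs : 0 < √(x + ε) := sqrt_pos.2 (by linarith)
  have hM : 0 ≤ M := (hf0 (ε + 1) (by simp)).trans (hfM (ε + 1) (by simp))
  calc √(x + ε) * ∫ y in Ioi ε, sqrtKernel ε x y * f y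
      ≤ √(x + ε) * ∫ y in Ioi ε, M * sqrtKernel ε x y := by
        refine mul_le_mul_of_nonneg_left ?_ hs.le
        exact setIntegral_mono_on (integrableOn_sqrtKernel_mul hε hf hf0 hfM x)
          ((integrableOn_sqrtKernel hε x).const_mul M) measurableSet_Ioi
          fun y hy => (le_norm_self _).trans (norm_sqrtKernel_mul_le hε.le hf0 hfM x hy)
    _ ≤ √(x + ε) * (M * (2 / √(x + ε))) := by
        rw [integral_const_mul]
        gcongr
        exact integral_sqrtKernel_le hε hx
    _ = 2 * M := by field_simp

lemma continuous_integral_sqrtKernel_mul (hε : 0 < ε)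
    (hf : AEStronglyMeasurable f (volume.restrict (Ioi ε)))
    (hf0 : ∀ y ∈ Ioi ε, 0 ≤ f y) (hfM : ∀ y ∈ Ioi ε, f y ≤ M) :
    Continuous fun x => ∫ y in Ioi ε, sqrtKernel ε x y * f y := by
  have hM : 0 ≤ M := (hf0 (ε + 1) (by simp)).trans (hfM (ε + 1) (by simp))
  refine continuous_of_dominated (bound := fun y => M * sqrtKernelMajorant ε y)
    (fun x => (measurable_sqrtKernel ε x).aestronglyMeasurable.mul hf)
    (fun x => (ae_restrict_iff' measurableSet_Ioi).2 <| ae_of_all _ fun y hy => ?_)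
    ((integrableOn_sqrtKernelMajorant hε.le hε).const_mul M)
    ((ae_restrict_iff' measurableSet_Ioi).2 <| ae_of_all _ fun y hy => ?_)
  · exact (norm_sqrtKernel_mul_le hε.le hf0 hfM x hy).trans
      (mul_le_mul_of_nonneg_left (sqrtKernel_le_sqrtKernelMajorant hε.le x (hε.trans hy)) hM)
  · exact (continuous_sqrtKernel_left (hε.trans hy) (by linarith [hy.out])).mul continuous_const

end Majorized

end Kernel

lemma mul_div_add_sq_div_le {t y c : ℝ} (ht : 0 ≤ t) (hy : 0 < y) (hc : 0 ≤ c) :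
    y * (t / (y + t ^ 2 / c)) ≤ t :=
  calc y * (t / (y + t ^ 2 / c)) ≤ y * (t / y) := by
        gcongr; exact le_add_of_nonneg_right (by positivity)
    _ = t := by field_simp

noncomputable def opBWeight (ε : ℝ) (ψ : ℝ → ℝ) (y : ℝ) : ℝ :=
  y * (ψ y / (y + ψ y ^ 2 / (y + ε)))

lemma opB_eq_integral_sqrtKernel_mul (lam ε : ℝ) (ψ : ℝ → ℝ) (x : ℝ) :
    opB lam ε ψ x =
      lam / 2 * √(x + ε) * ∫ y in Ioi ε, sqrtKernel ε x y * opBWeight ε ψ y := by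
  simp only [opB, sqrtKernel, opBWeight, add_add_abs_sub_eq_two_mul_max]
  congr 1
  refine integral_congr_ae (ae_of_all _ fun y => ?_)
  simp only
  ring

section Weight

variable {ε : ℝ} {ψ : ℝ → ℝ}

lemma opBWeight_nonneg (hε : 0 ≤ ε) (hψ : ∀ y ∈ Ioi ε, 0 ≤ ψ y) {y : ℝ}
    (hy : y ∈ Ioi ε) :
    0 ≤ opBWeight ε ψ y := by
  have := hψ y hy
  have : 0 < y := hε.trans_lt hy
  unfold opBWeight; positivity

lemma opBWeight_le (hε : 0 ≤ ε) (hψ : ∀ y ∈ Ioi ε, 0 ≤ ψ y) {y : ℝ}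
    (hy : y ∈ Ioi ε) :
    opBWeight ε ψ y ≤ ψ y :=
  mul_div_add_sq_div_le (hψ y hy) (hε.trans_lt hy) (by linarith [hy.out])

lemma continuousOn_opBWeight (hε : 0 ≤ ε) (hψc : ContinuousOn ψ (Ioi ε))
    (hψ : ∀ y ∈ Ioi ε, 0 ≤ ψ y) : ContinuousOn (opBWeight ε ψ) (Ioi ε) := by
  have hpos : ∀ y ∈ Ioi ε, 0 < y + ε := fun y hy => by linarith [hy.out]
  refine continuousOn_id.mul (hψc.div (continuousOn_id.add
    ((hψc.pow 2).div (by fun_prop) fun y hy => (hpos y hy).ne')) fun y hy => ?_)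
  have := hψ y hy
  have := hpos y hy
  have : 0 < y := hε.trans_lt hy
  exact (by positivity : 0 < y + ψ y ^ 2 / (y + ε)).ne'

end Weight

theorem stmt_15_general (ε lam : ℝ) (hε : 0 < ε) (hlam0 : 0 < lam)
    (ψ : ℝ → ℝ) (hψ : memW ε ψ) :
    sSup ((fun x => |opB lam ε ψ x|) '' Set.Ici ε) ≤
        lam * sSup ((fun x => |ψ x|) '' Set.Ici ε) ∧
      memW ε (opB lam ε ψ) := by
  obtain ⟨hψc, ⟨M₀, hM₀⟩, hψ0⟩ := hψ
  set M := sSup ((fun x => |ψ x|) '' Ici ε)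
  have hψ0' : ∀ y ∈ Ioi ε, 0 ≤ ψ y := fun y hy => hψ0 y (Ioi_subset_Ici_self hy)
  have hweightM : ∀ y ∈ Ioi ε, opBWeight ε ψ y ≤ M := fun y hy =>
    (opBWeight_le hε.le hψ0' hy).trans <| (le_abs_self _).trans <|
      le_csSup ⟨M₀, forall_mem_image.2 hM₀⟩ (mem_image_of_mem _ (Ioi_subset_Ici_self hy))
  have hweight0 : ∀ y ∈ Ioi ε, 0 ≤ opBWeight ε ψ y := fun _ => opBWeight_nonneg hε.le hψ0'
  have hweight : AEStronglyMeasurable (opBWeight ε ψ) (volume.restrict (Ioi ε)) :=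
    (continuousOn_opBWeight hε.le (hψc.mono Ioi_subset_Ici_self) hψ0').aestronglyMeasurable
      measurableSet_Ioi
  have hB0 : ∀ x ∈ Ici ε, 0 ≤ opB lam ε ψ x := fun x _ => by
    rw [opB_eq_integral_sqrtKernel_mul]
    have := integral_sqrtKernel_mul_nonneg hε.le hweight0 x
    positivity
  have hBM : ∀ x ∈ Ici ε, |opB lam ε ψ x| ≤ lam * M := fun x hx => by
    rw [abs_of_nonneg (hB0 x hx), opB_eq_integral_sqrtKernel_mul, mul_assoc]
    linarith [mul_le_mul_of_nonneg_left
      (sqrt_mul_integral_sqrtKernel_mul_le hε hweight hweight0 hweightM hx) hlam0.le]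
  refine ⟨csSup_le (nonempty_Ici.image _) (forall_mem_image.2 hBM),
    Continuous.continuousOn ?_, ⟨lam * M, hBM⟩, hB0⟩
  rw [continuous_congr (opB_eq_integral_sqrtKernel_mul lam ε ψ)]
  exact (continuous_const.mul (by fun_prop)).mul
    (continuous_integral_sqrtKernel_mul hε hweight hweight0 hweightM)

theorem stmt_15 (ε lam : ℝ) (hε : 0 < ε) (hlam0 : 0 < lam) (hlam1 : lam < 1)
    (ψ : ℝ → ℝ) (hψ : memW ε ψ) :
    sSup ((fun x => |opB lam ε ψ x|) '' Set.Ici ε) ≤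
        lam * sSup ((fun x => |ψ x|) '' Set.Ici ε) ∧
      memW ε (opB lam ε ψ) :=
  stmt_15_general ε lam hε hlam0 ψ hψ
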